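/- Let 𝓢 be a complex Hilbert space, g > 0, and let γ₀ be a bounded operator on 𝓢 such that gγ₀ + i is invertible; set b = (gγ₀ − i)(gγ₀ + i)^{−1} and assume ‖b‖ < 1. Let u be a unitary operator on 𝓢 and σ ∈ ℂ with |σ| ≤ 1, and assume 1 + σu is invertible; define v = (g/i)(1 − σu)(1 + σu)^{−1}. Then: (a) 1 − σbu is invertible; (b) 1 + γ₀v is invertible; and (c) v(1 + γ₀v)^{−1} = g (1 − σu)(1 − σbu)^{−1}(gγ₀ + i)^{−1}. -/

import Mathlib

open Complex

/-! With `A = gγ₀ + i`, the operators `A` and `gγ₀ - i` commute, so `A b = gγ₀ - i` and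
`A (1 - σbu) = i(1 + σu) + gγ₀(1 - σu) = i(1 + γ₀v)(1 + σu)`.
Hence `1 + γ₀v` is a product of invertible operators, and the formula for `v(1 + γ₀v)⁻¹`
follows after cancelling `1 + σu`. The operator `1 - σbu` is invertible by the Neumann series,
since `‖σbu‖ = |σ|‖b‖ < 1` for unitary `u`. -/

theorem mul_mul_ringInverse_of_commute {M₀ : Type*} [MonoidWithZero M₀] {a b : M₀}
    (hab : Commute a b) (ha : IsUnit a) : a * (b * Ring.inverse a) = b := by
  rw [← mul_assoc, hab.eq, Ring.mul_inverse_cancel_right _ _ ha]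

section CayleyTransform

variable {𝕜 R : Type*} [Field 𝕜] [Ring R] [Algebra 𝕜 R]

theorem commute_add_smul_one_sub_smul_one (a : R) (c : 𝕜) :
    Commute (a + c • 1) (a - c • 1) := by
  have hca : Commute (c • (1 : R)) a := (Commute.one_left a).smul_left c
  exact ((Commute.refl a).sub_right hca.symm).add_left (hca.sub_right (Commute.refl _))

theorem add_smul_one_mul_one_sub_smul_mul {a b u : R} {c : 𝕜} (σ : 𝕜)
    (hb : (a + c • 1) * b = a - c • 1) :
    (a + c • 1) * (1 - σ • (b * u)) = c • (1 + σ • u) + a * (1 - σ • u) := by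
  rw [mul_sub, mul_one, mul_smul_comm, ← mul_assoc, hb]
  simp only [sub_mul, smul_mul_assoc, one_mul, mul_sub, mul_smul_comm, mul_one, smul_add]
  module

theorem smul_one_add_mul_mul_eq {γ u v : R} {g c σ : 𝕜} (hc : c ≠ 0)
    (hv : v * (1 + σ • u) = (g / c) • (1 - σ • u)) :
    c • ((1 + γ * v) * (1 + σ • u)) = c • (1 + σ • u) + (g • γ) * (1 - σ • u) := by
  rw [add_mul, one_mul, mul_assoc, hv, mul_smul_comm, smul_add, smul_smul,
    mul_div_cancel₀ _ hc, smul_mul_assoc]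

theorem isUnit_one_add_mul_and_mul_ringInverse_eq {γ u v : R} {g c σ : 𝕜} (hc : c ≠ 0)
    (hA : IsUnit (g • γ + c • 1))
    (hW : IsUnit (1 - σ • ((g • γ - c • 1) * Ring.inverse (g • γ + c • 1) * u)))
    (hC : IsUnit (1 + σ • u))
    (hv : v = (g / c) • ((1 - σ • u) * Ring.inverse (1 + σ • u))) :
    IsUnit (1 + γ * v) ∧ v * Ring.inverse (1 + γ * v) = g • ((1 - σ • u) *
      Ring.inverse (1 - σ • ((g • γ - c • 1) * Ring.inverse (g • γ + c • 1) * u)) *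
      Ring.inverse (g • γ + c • 1)) := by
  set A := g • γ + c • 1
  set W := 1 - σ • ((g • γ - c • 1) * Ring.inverse A * u)
  set C := 1 + σ • u
  set D := 1 - σ • u
  have hvC : v * C = (g / c) • D := by
    rw [hv, smul_mul_assoc, Ring.inverse_mul_cancel_right _ _ hC]
  have hAW : A * W = c • (1 + γ * v) * C := by
    rw [smul_mul_assoc, smul_one_add_mul_mul_eq hc hvC]
    exact add_smul_one_mul_one_sub_smul_mul σ <|
      mul_mul_ringInverse_of_commute (commute_add_smul_one_sub_smul_one _ _) hA
  have hPC : (1 + γ * v) * C = c⁻¹ • (A * W) := by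
    rw [hAW, smul_mul_assoc, smul_smul, inv_mul_cancel₀ hc, one_smul]
  have hP : IsUnit (1 + γ * v) := by
    have hcP : IsUnit (c • (1 + γ * v)) := by
      rw [← Units.isUnit_mul_units _ hC.unit, hC.unit_spec, ← hAW]
      exact hA.mul hW
    exact (isUnit_smul_iff (Units.mk0 c hc) _).mp hcP
  refine ⟨hP, ((Ring.eq_mul_inverse_iff_mul_eq _ _ _ hP).mpr ?_).symm⟩
  rw [← hC.mul_left_inj, hvC, mul_assoc, hPC, smul_mul_smul_comm, ← div_eq_mul_inv,
    mul_assoc, mul_assoc, Ring.inverse_mul_cancel_left _ _ hA,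
    Ring.inverse_mul_cancel _ hW, mul_one]

end CayleyTransform

theorem isUnit_one_sub_smul_mul_of_mem_unitary {𝕜 E : Type*} [NormedField 𝕜] [NormedRing E]
    [StarRing E] [CStarRing E] [CompleteSpace E] [NormedAlgebra 𝕜 E] {b u : E}
    (hu : u ∈ unitary E) {σ : 𝕜} (hσ : ‖σ‖ ≤ 1) (hb : ‖b‖ < 1) :
    IsUnit (1 - σ • (b * u)) := by
  refine (Units.oneSub _ ?_).isUnit
  rw [norm_smul, CStarRing.norm_mul_mem_unitary _ hu]
  exact (mul_le_of_le_one_left (norm_nonneg b) hσ).trans_lt hb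

theorem cayley_transform_t_operator_formula
    {S : Type*} [NormedAddCommGroup S] [InnerProductSpace ℂ S] [CompleteSpace S]
    (g : ℝ)
    (γ₀ : S →L[ℂ] S)
    (hγ : IsUnit ((g : ℂ) • γ₀ + Complex.I • (1 : S →L[ℂ] S)))
    (b : S →L[ℂ] S)
    (hb : b = ((g : ℂ) • γ₀ - Complex.I • (1 : S →L[ℂ] S)) *
      Ring.inverse ((g : ℂ) • γ₀ + Complex.I • (1 : S →L[ℂ] S)))
    (hbn : ‖b‖ < 1)
    (u : S →L[ℂ] S) (hu : u ∈ unitary (S →L[ℂ] S))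
    (σ : ℂ) (hσ : ‖σ‖ ≤ 1)
    (h1 : IsUnit ((1 : S →L[ℂ] S) + σ • u))
    (v : S →L[ℂ] S)
    (hv : v = ((g : ℂ) / Complex.I) •
      (((1 : S →L[ℂ] S) - σ • u) * Ring.inverse ((1 : S →L[ℂ] S) + σ • u))) :
    IsUnit ((1 : S →L[ℂ] S) - σ • (b * u)) ∧
    IsUnit ((1 : S →L[ℂ] S) + γ₀ * v) ∧
    v * Ring.inverse ((1 : S →L[ℂ] S) + γ₀ * v)
      = (g : ℂ) • (((1 : S →L[ℂ] S) - σ • u) *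
          Ring.inverse ((1 : S →L[ℂ] S) - σ • (b * u)) *
          Ring.inverse ((g : ℂ) • γ₀ + Complex.I • (1 : S →L[ℂ] S))) := by
  have hW := isUnit_one_sub_smul_mul_of_mem_unitary hu hσ hbn
  subst hb
  exact ⟨hW, isUnit_one_add_mul_and_mul_ringInverse_eq I_ne_zero hγ hW h1 hv⟩
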